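/- arXiv:2504.13708 — 6 statements merged into one kernel-verified Lean document; each statement's English description precedes it below -/
import Mathlib

section
/- The product of two sober measurable spaces is sober: if X and Y are measurable spaces in which the formation of Dirac measures is a bijection between points and {0,1}-valued probability measures, then the same holds for the product measurable space X × Y. -/
open MeasureTheory

/-- The `{0,1}`-valued probability measures on a measurable space. -/
def ZeroOnePM (X : Type*) [MeasurableSpace X] : Type _ :=
  {μ : Measure X // IsProbabilityMeasure μ ∧
    ∀ s : Set X, MeasurableSet s → μ s = 0 ∨ μ s = 1}

/-- The map sending a point to its Dirac measure, viewed as a `{0,1}`-valued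
probability measure. -/
noncomputable def diracMap (X : Type*) [MeasurableSpace X] : X → ZeroOnePM X :=
  fun x => ⟨Measure.dirac x, inferInstance, fun s hs => by
    rw [Measure.dirac_apply' x hs]
    by_cases h : x ∈ s <;> simp [h]⟩

/-- A measurable space is sober if the Dirac map is a bijection onto the
`{0,1}`-valued probability measures. The product of two sober measurable spaces
is sober. -/
theorem stmt8 {X Y : Type*} [MeasurableSpace X] [MeasurableSpace Y]
    (hX : Function.Bijective (diracMap X)) (hY : Function.Bijective (diracMap Y)) :
    Function.Bijective (diracMap (X × Y)) := by
  constructor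
  · intro p q h
    have hm : (Measure.dirac p : Measure (X × Y)) = Measure.dirac q :=
      congrArg Subtype.val h
    have h1 : Measure.dirac p.1 = Measure.dirac q.1 := by
      have := congrArg (fun μ : Measure (X × Y) => μ.map Prod.fst) hm
      simpa [Measure.map_dirac' measurable_fst] using this
    have h2 : Measure.dirac p.2 = Measure.dirac q.2 := by
      have := congrArg (fun μ : Measure (X × Y) => μ.map Prod.snd) hm
      simpa [Measure.map_dirac' measurable_snd] using this
    have e1 : p.1 = q.1 := hX.1 (Subtype.ext h1)
    have e2 : p.2 = q.2 := hY.1 (Subtype.ext h2)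
    exact Prod.ext e1 e2
  · rintro ⟨μ, hprob, h01⟩
    have : IsProbabilityMeasure μ := hprob
    -- pushforward measures
    have h01X : ∀ s : Set X, MeasurableSet s → μ.map Prod.fst s = 0 ∨ μ.map Prod.fst s = 1 := by
      intro s hs
      rw [Measure.map_apply measurable_fst hs]
      exact h01 _ (measurable_fst hs)
    have h01Y : ∀ s : Set Y, MeasurableSet s → μ.map Prod.snd s = 0 ∨ μ.map Prod.snd s = 1 := by
      intro s hs
      rw [Measure.map_apply measurable_snd hs]
      exact h01 _ (measurable_snd hs)
    obtain ⟨x, hx⟩ := hX.2 ⟨μ.map Prod.fst, Measure.isProbabilityMeasure_map measurable_fst.aemeasurable, h01X⟩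
    obtain ⟨y, hy⟩ := hY.2 ⟨μ.map Prod.snd, Measure.isProbabilityMeasure_map measurable_snd.aemeasurable, h01Y⟩
    have hx' : (Measure.dirac x : Measure X) = μ.map Prod.fst := congrArg Subtype.val hx
    have hy' : (Measure.dirac y : Measure Y) = μ.map Prod.snd := congrArg Subtype.val hy
    refine ⟨(x, y), Subtype.ext ?_⟩
    show (Measure.dirac (x, y) : Measure (X × Y)) = μ
    refine (ext_of_generate_finite _ generateFrom_prod.symm isPiSystem_prod ?_ (by simp)).symm
    · rintro _ ⟨s, hs, t, ht, rfl⟩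
      have hs : MeasurableSet s := hs
      have ht : MeasurableSet t := ht
      show μ (s ×ˢ t) = Measure.dirac (x, y) (s ×ˢ t)
      have hst : s ×ˢ t = Prod.fst ⁻¹' s ∩ Prod.snd ⁻¹' t := by
        ext p; simp [Set.mem_prod, and_comm]
      have hμs : μ (Prod.fst ⁻¹' s) = Measure.dirac x s := by
        rw [hx', Measure.map_apply measurable_fst hs]
      have hμt : μ (Prod.snd ⁻¹' t) = Measure.dirac y t := by
        rw [hy', Measure.map_apply measurable_snd ht]
      rw [Measure.dirac_apply' _ (hs.prod ht)]
      by_cases hxs : x ∈ s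
      · by_cases hyt : y ∈ t
        · have h2 : μ (Prod.snd ⁻¹' t)ᶜ = 0 := by
            rw [prob_compl_eq_zero_iff (measurable_snd ht), hμt]; simp [hyt]
          rw [hst, measure_inter_conull h2, hμs]
          simp [hxs, hyt, Set.indicator]
        · have h2 : μ (Prod.snd ⁻¹' t) = 0 := by rw [hμt, Measure.dirac_apply' _ ht]; simp [hyt]
          have hz : μ (s ×ˢ t) = 0 := by
            rw [hst]; exact measure_mono_null Set.inter_subset_right h2
          rw [hz]; simp [Set.indicator, hyt]
      · have h1 : μ (Prod.fst ⁻¹' s) = 0 := by rw [hμs, Measure.dirac_apply' _ hs]; simp [hxs]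
        have hz : μ (s ×ˢ t) = 0 := by
          rw [hst]; exact measure_mono_null Set.inter_subset_left h1
        rw [hz]; simp [Set.indicator, hxs]
end

section
/- Let X be a compact Hausdorff space and (f_n) a bounded monotone increasing sequence in C(X, ℝ). Then (f_n) has a supremum in the ordered vector space C(X, ℝ) if and only if the function g(x) := inf over open neighborhoods U of x of sup_{x' ∈ U, n ∈ ℕ} f_n(x') is continuous; and in that case sup_n f_n = g. -/
/-- For a bounded monotone increasing sequence `(f n)` in `C(X, ℝ)` on a compact
Hausdorff space `X`, the supremum in `C(X, ℝ)` exists iff the function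
`g x = ⨅_{U ∋ x open} ⨆_{x' ∈ U, n} f n x'` is continuous, in which case the
supremum equals `g`. -/
theorem stmt9 {X : Type*} [TopologicalSpace X] [CompactSpace X] [T2Space X]
    (f : ℕ → C(X, ℝ)) (hmono : Monotone f) (hbdd : ∃ c : ℝ, ∀ n x, f n x ≤ c) :
    ((∃ s : C(X, ℝ), IsLUB (Set.range f) s) ↔
        Continuous (fun x : X =>
          ⨅ U : {U : Set X // IsOpen U ∧ x ∈ U}, ⨆ q : U.1 × ℕ, f q.2 q.1)) ∧
      (∀ s : C(X, ℝ), IsLUB (Set.range f) s → ∀ x : X,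
        s x = ⨅ U : {U : Set X // IsOpen U ∧ x ∈ U}, ⨆ q : U.1 × ℕ, f q.2 q.1) := by
  obtain ⟨c, hc⟩ := hbdd
  set g : X → ℝ := fun x =>
    ⨅ U : {U : Set X // IsOpen U ∧ x ∈ U}, ⨆ q : U.1 × ℕ, f q.2 q.1 with hgdef
  have hne : ∀ x : X, Nonempty {U : Set X // IsOpen U ∧ x ∈ U} :=
    fun x => ⟨⟨Set.univ, isOpen_univ, trivial⟩⟩
  have hbddA : ∀ U : Set X, BddAbove (Set.range fun q : U × ℕ => f q.2 q.1) := by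
    intro U
    refine ⟨c, ?_⟩
    rintro _ ⟨q, rfl⟩
    exact hc _ _
  -- each f n x is below the sup over any neighborhood
  have hUB : ∀ (x : X) (U : {U : Set X // IsOpen U ∧ x ∈ U}) (n : ℕ),
      f n x ≤ ⨆ q : U.1 × ℕ, f q.2 q.1 := by
    intro x U n
    exact le_ciSup (hbddA U.1) (⟨⟨x, U.2.2⟩, n⟩ : U.1 × ℕ)
  have hlow : ∀ x : X, BddBelow (Set.range fun U : {U : Set X // IsOpen U ∧ x ∈ U} =>
      ⨆ q : U.1 × ℕ, f q.2 q.1) := by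
    intro x
    refine ⟨f 0 x, ?_⟩
    rintro _ ⟨U, rfl⟩
    exact hUB x U 0
  -- Lemma A : f n ≤ g pointwise
  have hfg : ∀ (n : ℕ) (x : X), f n x ≤ g x := by
    intro n x
    haveI := hne x
    exact le_ciInf fun U => hUB x U n
  -- Lemma B : g ≤ any continuous upper bound
  have hgle : ∀ s : C(X, ℝ), (∀ n x, f n x ≤ s x) → ∀ x, g x ≤ s x := by
    intro s hs x
    refine le_of_forall_pos_le_add ?_
    intro ε hε
    have hxU : x ∈ s ⁻¹' Set.Iio (s x + ε) := by
      simp [Set.mem_preimage, lt_add_of_pos_right _ hε]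
    have hUo : IsOpen (s ⁻¹' Set.Iio (s x + ε)) := isOpen_Iio.preimage s.continuous
    have h1 : g x ≤ ⨆ q : (s ⁻¹' Set.Iio (s x + ε) : Set X) × ℕ, f q.2 q.1 :=
      ciInf_le (hlow x) ⟨s ⁻¹' Set.Iio (s x + ε), hUo, hxU⟩
    refine h1.trans ?_
    haveI : Nonempty (s ⁻¹' Set.Iio (s x + ε) : Set X) := ⟨⟨x, hxU⟩⟩
    refine ciSup_le ?_
    rintro ⟨y, n⟩
    exact (hs n y).trans (le_of_lt y.2)
  -- Lemma C : any LUB is ≤ g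
  have hsleg : ∀ s : C(X, ℝ), IsLUB (Set.range f) s → ∀ x, s x ≤ g x := by
    intro s hs x
    by_contra hlt
    push_neg at hlt
    haveI := hne x
    obtain ⟨U, hU⟩ := exists_lt_of_ciInf_lt hlt
    set cU : ℝ := ⨆ q : U.1 × ℕ, f q.2 q.1 with hcU
    have hδ : 0 < s x - cU := sub_pos.mpr hU
    -- Urysohn function : 0 on Uᶜ, 1 at x
    obtain ⟨φ, hφ0, hφ1, hφmem⟩ := exists_continuous_zero_one_of_isClosed
      (U.2.1.isClosed_compl) (isClosed_singleton (x := x))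
      (by simp [Set.disjoint_singleton_right, U.2.2])
    set s' : C(X, ℝ) := ⟨fun y => max cU (s y - (s x - cU) * φ y), by fun_prop⟩ with hs'
    have hub : s' ∈ upperBounds (Set.range f) := by
      rintro _ ⟨n, rfl⟩
      rw [ContinuousMap.le_def]
      intro y
      by_cases hy : y ∈ U.1
      · have : f n y ≤ cU := le_ciSup (hbddA U.1) (⟨⟨y, hy⟩, n⟩ : U.1 × ℕ)
        exact this.trans (le_max_left _ _)
      · have hφy : φ y = 0 := hφ0 hy
        have hfs : f n y ≤ s y := (hs.1 (Set.mem_range_self n)) y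
        calc f n y ≤ s y := hfs
          _ = s y - (s x - cU) * φ y := by rw [hφy]; ring
          _ ≤ max cU (s y - (s x - cU) * φ y) := le_max_right _ _
    have hle := (hs.2 hub) x
    have hφx : φ x = 1 := hφ1 rfl
    simp only [hs', ContinuousMap.coe_mk, hφx, mul_one] at hle
    have : s x ≤ cU := by
      rcases max_cases cU (s x - (s x - cU)) with ⟨h1, _⟩ | ⟨h1, _⟩ <;> rw [h1] at hle
      · exact hle
      · linarith
    linarith
  constructor
  · constructor
    · rintro ⟨s, hs⟩
      have : g = fun x => s x := by
        funext x
        exact (le_antisymm (hsleg s hs x) (hgle s (fun n x => (hs.1 (Set.mem_range_self n)) x) x)).symm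
      rw [this]
      exact s.continuous
    · intro hgc
      refine ⟨⟨g, hgc⟩, ?_, ?_⟩
      · rintro _ ⟨n, rfl⟩
        rw [ContinuousMap.le_def]
        exact hfg n
      · intro s hs
        rw [ContinuousMap.le_def]
        exact hgle s fun n x => (hs (Set.mem_range_self n)) x
  · intro s hs x
    exact le_antisymm (hsleg s hs x) (hgle s (fun n x => (hs.1 (Set.mem_range_self n)) x) x)
end

section
/- Let X be a compact Hausdorff space and (f_n) a monotone decreasing sequence of nonnegative functions in C(X, ℝ). Then inf_n f_n = 0 in the ordered space C(X, ℝ) if and only if the set {x ∈ X : inf_n f_n(x) > 0} is meager in X. -/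
/-- For a monotone decreasing sequence of nonnegative functions in `C(X, ℝ)` on a
compact Hausdorff space `X`, the infimum in `C(X, ℝ)` is `0` iff the set where the
pointwise infimum is positive is meager. -/
theorem stmt10 {X : Type*} [TopologicalSpace X] [CompactSpace X] [T2Space X]
    (f : ℕ → C(X, ℝ)) (hanti : Antitone f) (hpos : ∀ n, 0 ≤ f n) :
    IsGLB (Set.range f) 0 ↔ IsMeagre {x : X | 0 < ⨅ n, f n x} := by
  have hbdd : ∀ x : X, BddBelow (Set.range fun n => f n x) := fun x =>
    ⟨0, by rintro y ⟨n, rfl⟩; exact hpos n x⟩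
  constructor
  · intro hglb
    -- the positive set is contained in a countable union of closed nowhere dense sets
    set A : ℕ → Set X := fun k => ⋂ n, {x : X | (1 : ℝ) / (k + 1) ≤ f n x} with hA
    have hAclosed : ∀ k, IsClosed (A k) := fun k =>
      isClosed_iInter fun n => isClosed_le continuous_const (f n).continuous
    have hAint : ∀ k, interior (A k) = ∅ := by
      intro k
      by_contra hne
      obtain ⟨x0, hx0⟩ := Set.nonempty_iff_ne_empty.mpr hne
      -- Urysohn
      obtain ⟨φ, hφ0, hφ1, hφ01⟩ := exists_continuous_zero_one_of_isClosed
        (isOpen_interior.isClosed_compl) (isClosed_singleton (x := x0))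
        (Set.disjoint_singleton_right.mpr (not_not_intro hx0))
      set h : C(X, ℝ) := ((1 : ℝ) / (k + 1)) • φ with hh
      have hlb : h ∈ lowerBounds (Set.range f) := by
        rintro g ⟨n, rfl⟩
        rw [ContinuousMap.le_def]
        intro x
        by_cases hx : x ∈ interior (A k)
        · have h1 : φ x ≤ 1 := (hφ01 x).2
          have h2 : (1 : ℝ) / (k + 1) ≤ f n x := by
            have := interior_subset hx
            exact Set.mem_iInter.mp this n
          have hknn : (0:ℝ) ≤ 1 / (k+1) := by positivity
          calc h x = (1 / (k+1)) * φ x := rfl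
            _ ≤ (1 / (k+1)) * 1 := by nlinarith
            _ ≤ f n x := by simpa using h2
        · have hφx : φ x = 0 := hφ0 hx
          have : h x = 0 := by simp [hh, hφx]
          rw [this]; exact hpos n x
      have hle := ContinuousMap.le_def.mp (hglb.2 hlb) x0
      have hφx0 : φ x0 = 1 := hφ1 rfl
      have hx0val : h x0 = (1:ℝ)/(k+1) := by simp [hh, hφx0]
      rw [hx0val] at hle
      have : (0:ℝ) < 1 / (k+1) := by positivity
      simp only [ContinuousMap.zero_apply] at hle
      linarith
    have hsub : {x : X | 0 < ⨅ n, f n x} ⊆ ⋃ k, A k := by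
      intro x hx
      obtain ⟨k, hk⟩ := exists_nat_one_div_lt (Set.mem_setOf.mp hx)
      refine Set.mem_iUnion.mpr ⟨k, Set.mem_iInter.mpr fun n => ?_⟩
      exact le_trans hk.le (ciInf_le (hbdd x) n)
    refine (isMeagre_iUnion fun k => ?_).mono hsub
    rw [isMeagre_iff_countable_union_isNowhereDense]
    exact ⟨{A k}, by simpa [((hAclosed k).isNowhereDense_iff)] using hAint k,
      Set.countable_singleton _, by simp⟩
  · intro hmeagre
    constructor
    · rintro g ⟨n, rfl⟩; exact hpos n
    · intro h hlb
      intro x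
      by_contra hx
      push_neg at hx
      have hopen : IsOpen {y : X | 0 < h y} := isOpen_lt continuous_const h.continuous
      have hdense : Dense {x : X | 0 < ⨅ n, f n x}ᶜ := dense_of_mem_residual hmeagre
      obtain ⟨y, hy1, hy2⟩ := hdense.exists_mem_open hopen ⟨x, hx⟩
      have : 0 < ⨅ n, f n y := lt_of_lt_of_le hy2 (le_ciInf fun n => hlb ⟨n, rfl⟩ y)
      exact hy1 this
end

section
/- Let X be a compact Hausdorff space and (f_n) a bounded monotone increasing sequence in C(X, ℝ) which has a supremum f in C(X, ℝ). Then the set {x ∈ X : f(x) ≠ sup_n f_n(x)} is meager; that is, the order supremum agrees with the pointwise supremum outside a meager set. -/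
/-- If a bounded monotone increasing sequence in `C(X, ℝ)` on a compact Hausdorff
space has a supremum `s` in `C(X, ℝ)`, then `s` agrees with the pointwise supremum
outside a meager set. -/
theorem stmt11 {X : Type*} [TopologicalSpace X] [CompactSpace X] [T2Space X]
    (f : ℕ → C(X, ℝ)) (hmono : Monotone f) (hbdd : ∃ c : ℝ, ∀ n x, f n x ≤ c)
    (s : C(X, ℝ)) (hs : IsLUB (Set.range f) s) :
    IsMeagre {x : X | s x ≠ ⨆ n, f n x} := by
  obtain ⟨c, hc⟩ := hbdd
  have hfs : ∀ n, f n ≤ s := fun n => hs.1 (Set.mem_range_self n)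
  have hbddA : ∀ x : X, BddAbove (Set.range fun n => f n x) := by
    intro x
    exact ⟨c, by rintro _ ⟨n, rfl⟩; exact hc n x⟩
  have hg_le : ∀ x, (⨆ n, f n x) ≤ s x := fun x =>
    ciSup_le fun n => hfs n x
  -- closed pieces
  set E : ℕ → Set X := fun k => {x | ∀ n, f n x ≤ s x - 1 / (k + 1)} with hE
  have hEclosed : ∀ k, IsClosed (E k) := by
    intro k
    have : E k = ⋂ n, {x | f n x ≤ s x - 1 / (k + 1)} := by
      ext x; simp [hE, Set.mem_iInter]
    rw [this]
    exact isClosed_iInter fun n =>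
      isClosed_le (f n).continuous (by continuity)
  have hEint : ∀ k, interior (E k) = ∅ := by
    intro k
    by_contra h
    obtain ⟨x0, hx0⟩ := Set.nonempty_iff_ne_empty.2 h
    set U := interior (E k)
    have hUopen : IsOpen U := isOpen_interior
    -- Urysohn
    obtain ⟨h, h0, h1, hmem⟩ := exists_continuous_zero_one_of_isClosed
      (hUopen.isClosed_compl) (isClosed_singleton (x := x0))
      (by simp [Set.disjoint_singleton_right, hx0])
    set ε : ℝ := 1 / (k + 1)
    have hε : (0 : ℝ) < ε := by positivity
    have hub : s - ε • h ∈ upperBounds (Set.range f) := by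
      rintro _ ⟨n, rfl⟩
      rw [ContinuousMap.le_def]
      intro x
      by_cases hxU : x ∈ U
      · have hfx : f n x ≤ s x - ε := interior_subset hxU n
        have hh1 : h x ≤ 1 := (hmem x).2
        have : ε * h x ≤ ε := by nlinarith
        simp only [ContinuousMap.sub_apply, ContinuousMap.smul_apply, smul_eq_mul]
        linarith
      · have : h x = 0 := h0 hxU
        simp only [ContinuousMap.sub_apply, ContinuousMap.smul_apply, smul_eq_mul, this]
        have := ContinuousMap.le_def.mp (hfs n) x
        linarith
    have := ContinuousMap.le_def.mp (hs.2 hub) x0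
    have hx1 : h x0 = 1 := h1 rfl
    simp only [ContinuousMap.sub_apply, ContinuousMap.smul_apply, smul_eq_mul, hx1] at this
    linarith
  have hsub : {x : X | s x ≠ ⨆ n, f n x} ⊆ ⋃ k, E k := by
    intro x hx
    have hlt : (⨆ n, f n x) < s x := lt_of_le_of_ne (hg_le x) (Ne.symm hx)
    obtain ⟨k, hk⟩ := exists_nat_one_div_lt (sub_pos.2 hlt)
    refine Set.mem_iUnion.2 ⟨k, fun n => ?_⟩
    have h1 : f n x ≤ ⨆ n, f n x := le_ciSup (hbddA x) n
    have h2 : 1 / ((k : ℝ) + 1) ≤ s x - ⨆ n, f n x := le_of_lt hk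
    linarith
  refine (isMeagre_iUnion fun k => ?_).mono hsub
  rw [isMeagre_iff_countable_union_isNowhereDense]
  exact ⟨{E k}, by
    simpa using (hEclosed k).isNowhereDense_iff.2 (hEint k),
    Set.countable_singleton _, by simp⟩
end

section
/- Let A be a monotone σ-complete C*-algebra and I a two-sided *-ideal of A. Then the σ-closure of I (the smallest σ-closed *-subspace of A containing I) is again a two-sided ideal of A. -/
/-- A σ-closed *-subspace of a C*-algebra: a linear subspace closed under the
involution and under suprema of bounded monotone increasing sequences of
self-adjoint elements. -/
def IsStarSigmaSubspace {A : Type*} [CStarAlgebra A] [PartialOrder A]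
    [StarOrderedRing A] (S : Set A) : Prop :=
  (0 : A) ∈ S ∧ (∀ x ∈ S, ∀ y ∈ S, x + y ∈ S) ∧ (∀ (c : ℂ), ∀ x ∈ S, c • x ∈ S) ∧
    (∀ x ∈ S, star x ∈ S) ∧
    (∀ (f : ℕ → A) (a : A), (∀ n, f n ∈ S) → (∀ n, IsSelfAdjoint (f n)) →
      Monotone f → BddAbove (Set.range f) → IsLUB (Set.range f) a → a ∈ S)

namespace Stmt14Aux

variable {A : Type*} [CStarAlgebra A] [PartialOrder A] [StarOrderedRing A]

/-- The σ-closure of the ideal `I`. -/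
def Mcl (I : TwoSidedIdeal A) : Set A :=
  ⋂₀ {S : Set A | IsStarSigmaSubspace S ∧ (I : Set A) ⊆ S}

lemma mem_Mcl {I : TwoSidedIdeal A} {x : A} (hx : x ∈ Mcl I) {S : Set A}
    (hS : IsStarSigmaSubspace S ∧ (I : Set A) ⊆ S) : x ∈ S :=
  hx S hS

lemma Mcl_sigma (I : TwoSidedIdeal A) : IsStarSigmaSubspace (Mcl I) := by
  refine ⟨?_, ?_, ?_, ?_, ?_⟩
  · intro S hS; exact hS.1.1
  · intro x hx y hy S hS; exact hS.1.2.1 x (hx S hS) y (hy S hS)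
  · intro c x hx S hS; exact hS.1.2.2.1 c x (hx S hS)
  · intro x hx S hS; exact hS.1.2.2.2.1 x (hx S hS)
  · intro f a hf hsa hm hb hl S hS
    exact hS.1.2.2.2.2 f a (fun n => hf n S hS) hsa hm hb hl

lemma I_subset_Mcl (I : TwoSidedIdeal A) : (I : Set A) ⊆ Mcl I :=
  fun _ hx S hS => hS.2 hx

/-- The σ-closure is stable under compression by invertible elements. -/
lemma conj_mem (I : TwoSidedIdeal A) {c : A} (hc : IsUnit c) {x : A}
    (hx : x ∈ Mcl I) : star c * x * c ∈ Mcl I := by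
  obtain ⟨u, rfl⟩ := hc
  set M := Mcl I with hM
  have hMs := Mcl_sigma I
  refine mem_Mcl hx (S := {y : A | star (u : A) * y * (u : A) ∈ M}) ⟨⟨?_, ?_, ?_, ?_, ?_⟩, ?_⟩
  · show star (u : A) * 0 * (u : A) ∈ M
    simpa using hMs.1
  · intro p hp q hq
    show star (u : A) * (p + q) * (u : A) ∈ M
    have := hMs.2.1 _ hp _ hq
    simpa [mul_add, add_mul] using this
  · intro k p hp
    show star (u : A) * (k • p) * (u : A) ∈ M
    have := hMs.2.2.1 k _ hp
    simpa [mul_smul_comm, smul_mul_assoc] using this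
  · intro p hp
    show star (u : A) * star p * (u : A) ∈ M
    have := hMs.2.2.2.1 _ hp
    simpa [star_mul, mul_assoc] using this
  · intro f a hf hsa hm hb hl
    show star (u : A) * a * (u : A) ∈ M
    set g : ℕ → A := fun n => star (u : A) * f n * (u : A) with hg
    have hsag : ∀ n, IsSelfAdjoint (g n) := fun n => (hsa n).conjugate' (u : A)
    have hmg : Monotone g := fun m n h => star_left_conjugate_le_conjugate (hm h) (u : A)
    have hub : (star (u : A) * a * (u : A)) ∈ upperBounds (Set.range g) := by
      rintro _ ⟨n, rfl⟩
      exact star_left_conjugate_le_conjugate (hl.1 ⟨n, rfl⟩) (u : A)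
    have hlg : IsLUB (Set.range g) (star (u : A) * a * (u : A)) := by
      refine ⟨hub, ?_⟩
      intro b hb'
      have key : ∀ n, f n ≤ star ((u⁻¹ : Aˣ) : A) * b * ((u⁻¹ : Aˣ) : A) := by
        intro n
        have h1 := star_left_conjugate_le_conjugate (hb' ⟨n, rfl⟩) ((u⁻¹ : Aˣ) : A)
        have h2 : star ((u⁻¹ : Aˣ) : A) * (star (u : A) * f n * (u : A)) *
            ((u⁻¹ : Aˣ) : A) = f n := by
          have e1 : star ((u⁻¹ : Aˣ) : A) * star (u : A) = 1 := by
            rw [← star_mul]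
            simp
          calc star ((u⁻¹ : Aˣ) : A) * (star (u : A) * f n * (u : A)) * ((u⁻¹ : Aˣ) : A)
              = (star ((u⁻¹ : Aˣ) : A) * star (u : A)) * f n * ((u : A) * ((u⁻¹ : Aˣ) : A)) := by
                simp only [mul_assoc]
            _ = f n := by rw [e1]; simp
        rw [h2] at h1
        exact h1
      have ha : a ≤ star ((u⁻¹ : Aˣ) : A) * b * ((u⁻¹ : Aˣ) : A) := by
        apply hl.2
        rintro _ ⟨n, rfl⟩
        exact key n
      have h3 := star_left_conjugate_le_conjugate ha (u : A)
      have h4 : star (u : A) * (star ((u⁻¹ : Aˣ) : A) * b * ((u⁻¹ : Aˣ) : A)) * (u : A) = b := by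
        have e1 : star (u : A) * star ((u⁻¹ : Aˣ) : A) = 1 := by
          rw [← star_mul]
          simp
        calc star (u : A) * (star ((u⁻¹ : Aˣ) : A) * b * ((u⁻¹ : Aˣ) : A)) * (u : A)
            = (star (u : A) * star ((u⁻¹ : Aˣ) : A)) * b * (((u⁻¹ : Aˣ) : A) * (u : A)) := by
              simp only [mul_assoc]
          _ = b := by rw [e1]; simp
      rw [h4] at h3
      exact h3
    exact hMs.2.2.2.2 g _ (fun n => hf n) hsag hmg ⟨_, hub⟩ hlg
  · intro y hy
    have : star (u : A) * y * (u : A) ∈ I :=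
      I.mul_mem_right _ _ (I.mul_mem_left _ _ hy)
    exact I_subset_Mcl I this

/-- The σ-closure is a left ideal. -/
lemma left_mul_mem (I : TwoSidedIdeal A) (a : A) {x : A} (hx : x ∈ Mcl I) :
    a * x ∈ Mcl I := by
  have hMs := Mcl_sigma I
  set r : ℝ := (‖a‖ + 1)⁻¹ with hr
  have hrpos : 0 < r := by positivity
  have hunit : ∀ w : ℂ, ‖w‖ = r → IsUnit (1 + w • star a) := by
    intro w hw
    have h0 : ‖w • star a‖ < 1 := by
      rw [norm_smul, hw, norm_star, hr]
      have h1 : (‖a‖ + 1)⁻¹ * ‖a‖ < (‖a‖ + 1)⁻¹ * (‖a‖ + 1) := by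
        apply mul_lt_mul_of_pos_left (by linarith) (by positivity)
      have h2 : (‖a‖ + 1)⁻¹ * (‖a‖ + 1) = 1 := by
        field_simp
      linarith
    have h1 : ‖-(w • star a)‖ < 1 := by simpa using h0
    have := (Units.oneSub _ h1).isUnit
    rwa [Units.val_oneSub, sub_neg_eq_add] at this
  have hnr : ∀ c : ℂ, ‖c‖ = 1 → ‖c * (r : ℂ)‖ = r := by
    intro c hc
    rw [norm_mul, hc, one_mul, Complex.norm_real]
    exact abs_of_pos hrpos
  -- four invertible elements
  have hu0 : IsUnit (1 + ((r : ℂ)) • star a) := hunit _ (by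
    rw [Complex.norm_real]; exact abs_of_pos hrpos)
  have hu1 : IsUnit (1 + (Complex.I * (r : ℂ)) • star a) := hunit _ (hnr _ (by simp))
  have hu2 : IsUnit (1 + (-(r : ℂ)) • star a) := hunit _ (by
    rw [norm_neg, Complex.norm_real]; exact abs_of_pos hrpos)
  have hu3 : IsUnit (1 + (-(Complex.I * (r : ℂ))) • star a) := hunit _ (by
    rw [norm_neg]; exact hnr _ (by simp))
  set c0 : A := 1 + ((r : ℂ)) • star a with hc0
  set c1 : A := 1 + (Complex.I * (r : ℂ)) • star a with hc1
  set c2 : A := 1 + (-(r : ℂ)) • star a with hc2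
  set c3 : A := 1 + (-(Complex.I * (r : ℂ))) • star a with hc3
  have T0 : star c0 * x * c0 ∈ Mcl I := conj_mem I hu0 hx
  have T1 : star c1 * x * c1 ∈ Mcl I := conj_mem I hu1 hx
  have T2 : star c2 * x * c2 ∈ Mcl I := conj_mem I hu2 hx
  have T3 : star c3 * x * c3 ∈ Mcl I := conj_mem I hu3 hx
  set y : A := star c0 * x * c0 + Complex.I • (star c1 * x * c1) +
      (-1 : ℂ) • (star c2 * x * c2) + (-Complex.I) • (star c3 * x * c3) with hy
  have hyM : y ∈ Mcl I := by
    apply hMs.2.1 _ _ _ (hMs.2.2.1 _ _ T3)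
    apply hMs.2.1 _ _ _ (hMs.2.2.1 _ _ T2)
    exact hMs.2.1 _ T0 _ (hMs.2.2.1 _ _ T1)
  have hid : y = ((4 : ℂ) * (r : ℂ)) • (a * x) := by
    rw [hy, hc0, hc1, hc2, hc3]
    simp only [star_add, star_one, star_neg, star_smul, star_star, Complex.star_def, map_mul,
      map_neg, Complex.conj_I, Complex.conj_ofReal,
      mul_add, add_mul, one_mul, mul_one, smul_mul_assoc, mul_smul_comm,
      smul_smul, smul_add, smul_neg, neg_smul, smul_sub, mul_assoc, neg_mul, mul_neg, neg_neg]
    match_scalars <;> ring_nf <;> simp only [Complex.I_sq] <;> ring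
  have hrne : ((4 : ℂ) * (r : ℂ)) ≠ 0 := by
    simp only [ne_eq, mul_eq_zero, OfNat.ofNat_ne_zero, false_or]
    exact_mod_cast hrpos.ne'
  have : a * x = ((4 : ℂ) * (r : ℂ))⁻¹ • y := by
    rw [hid, smul_smul, inv_mul_cancel₀ hrne, one_smul]
  rw [this]
  exact hMs.2.2.1 _ _ hyM

end Stmt14Aux

/-- In a monotone σ-complete C*-algebra, the σ-closure (smallest σ-closed
*-subspace) of a two-sided *-ideal is again a two-sided ideal. -/
theorem stmt14 {A : Type*} [CStarAlgebra A] [PartialOrder A] [StarOrderedRing A]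
    (hcomplete : ∀ f : ℕ → A, (∀ n, IsSelfAdjoint (f n)) → Monotone f →
      BddAbove (Set.range f) → ∃ a, IsLUB (Set.range f) a)
    (I : TwoSidedIdeal A) (hIstar : ∀ x ∈ I, star x ∈ I) :
    ∀ x ∈ ⋂₀ {S : Set A | IsStarSigmaSubspace S ∧ (I : Set A) ⊆ S},
      ∀ a : A, a * x ∈ ⋂₀ {S : Set A | IsStarSigmaSubspace S ∧ (I : Set A) ⊆ S} ∧
        x * a ∈ ⋂₀ {S : Set A | IsStarSigmaSubspace S ∧ (I : Set A) ⊆ S} := by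
  intro x hx a
  have hx' : x ∈ Stmt14Aux.Mcl I := hx
  have hMs := Stmt14Aux.Mcl_sigma I
  constructor
  · exact Stmt14Aux.left_mul_mem I a hx'
  · have h1 : star x ∈ Stmt14Aux.Mcl I := hMs.2.2.2.1 x hx'
    have h2 := Stmt14Aux.left_mul_mem I (star a) h1
    have h3 := hMs.2.2.2.1 _ h2
    have h4 : star (star a * star x) = x * a := by
      rw [star_mul, star_star, star_star]
    rw [h4] at h3
    exact h3
end

section
/- Let X be a Stone space. Then for every continuous function f : X → [0,1] and every ε > 0, there exists a clopen set U ⊆ X whose indicator function p = χ_U satisfies f − 2ε ≤ p ≤ ε⁻¹ f pointwise. -/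
lemma aux_clopen_sep {X : Type*} [TopologicalSpace X] [CompactSpace X] [T2Space X]
    [TotallyDisconnectedSpace X] {K U : Set X} (hK : IsCompact K) (hU : IsOpen U)
    (hKU : K ⊆ U) : ∃ V : Set X, IsClopen V ∧ K ⊆ V ∧ V ⊆ U := by
  have : ∀ x ∈ K, ∃ V : Set X, IsClopen V ∧ x ∈ V ∧ V ⊆ U := fun x hx =>
    compact_exists_isClopen_in_isOpen hU (hKU hx)
  choose! V hVc hVx hVU using this
  obtain ⟨t, ht⟩ := hK.elim_finite_subcover (fun x : K => V x) (fun x => (hVc x x.2).2)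
    (fun x hx => Set.mem_iUnion.2 ⟨⟨x, hx⟩, hVx x hx⟩)
  refine ⟨⋃ x ∈ t, V x, isClopen_biUnion_finset (fun x _ => hVc x x.2), ?_, ?_⟩
  · intro x hx
    obtain ⟨i, hi, hxi⟩ := Set.mem_iUnion₂.1 (ht hx)
    exact Set.mem_iUnion₂.2 ⟨i, hi, hxi⟩
  · exact Set.iUnion₂_subset fun i _ => hVU i i.2

/-- In a Stone space, every continuous `f : X → [0,1]` can be sandwiched, up to
`ε`, between a clopen indicator function: `f - 2ε ≤ χ_U ≤ ε⁻¹ f`. -/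
theorem stmt17 {X : Type*} [TopologicalSpace X] [CompactSpace X] [T2Space X]
    [TotallyDisconnectedSpace X] (f : C(X, ℝ)) (hf0 : ∀ x, 0 ≤ f x)
    (hf1 : ∀ x, f x ≤ 1) (ε : ℝ) (hε : 0 < ε) :
    ∃ U : Set X, IsClopen U ∧
      ∀ x, f x - 2 * ε ≤ U.indicator (fun _ => (1 : ℝ)) x ∧
        U.indicator (fun _ => (1 : ℝ)) x ≤ ε⁻¹ * f x := by
  set K : Set X := f ⁻¹' (Set.Ici (2 * ε)) with hKdef
  set W : Set X := f ⁻¹' (Set.Ioi ε) with hWdef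
  have hK : IsCompact K := (IsClosed.preimage f.continuous isClosed_Ici).isCompact
  have hW : IsOpen W := IsOpen.preimage f.continuous isOpen_Ioi
  have hKW : K ⊆ W := by
    intro x hx
    have hx' : 2 * ε ≤ f x := hx
    show ε < f x
    linarith
  obtain ⟨U, hUc, hKU, hUW⟩ := aux_clopen_sep hK hW hKW
  refine ⟨U, hUc, fun x => ?_⟩
  by_cases hx : x ∈ U
  · rw [Set.indicator_of_mem hx]
    constructor
    · linarith [hf1 x]
    · have h2 : ε < f x := hUW hx
      rw [inv_mul_eq_div, le_div_iff₀ hε, one_mul]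
      exact h2.le
  · rw [Set.indicator_of_notMem hx]
    have : f x < 2 * ε := by
      by_contra h
      exact hx (hKU (le_of_not_gt h))
    constructor
    · linarith
    · exact mul_nonneg (inv_nonneg.2 hε.le) (hf0 x)
end
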